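/- arXiv:2111.04756 — 4 statements merged into one kernel-verified Lean document; each statement's English description precedes it below -/
import Mathlib

section
/- Let Q : ℝ^n → ℝ be a quadratic form. If there exist points a, b in the closed positive orthant with Q(a) > 0 and Q(b) < 0, then there exists a point p in the open positive orthant (all coordinates strictly positive) with Q(p) = 0. -/
open Matrix

lemma cont_quad (n : ℕ) (M : Matrix (Fin n) (Fin n) ℝ) :
    Continuous (fun x : Fin n → ℝ => x ⬝ᵥ M.mulVec x) := by
  simp only [dotProduct, Matrix.mulVec, dotProduct]
  apply continuous_finset_sum
  intro i _
  exact (continuous_apply i).mul (continuous_finset_sum _ fun j _ =>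
    (continuous_const.mul (continuous_apply j)))

/-- If a quadratic form `Q x = xᵀ M x` (M symmetric) is positive somewhere and
negative somewhere on the closed positive orthant, then it has a zero in the open positive
orthant. -/
theorem stmt_0 (n : ℕ) (M : Matrix (Fin n) (Fin n) ℝ) (hM : M.IsSymm)
    (Q : (Fin n → ℝ) → ℝ) (hQ : ∀ x, Q x = x ⬝ᵥ M.mulVec x)
    (a b : Fin n → ℝ) (ha : ∀ i, 0 ≤ a i) (hb : ∀ i, 0 ≤ b i)
    (hQa : 0 < Q a) (hQb : Q b < 0) :
    ∃ p : Fin n → ℝ, (∀ i, 0 < p i) ∧ Q p = 0 := by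
  have hQcont : Continuous Q := by
    have : Q = fun x => x ⬝ᵥ M.mulVec x := funext hQ
    rw [this]; exact cont_quad n M
  -- perturb a and b into the open orthant
  have hperta : Continuous (fun ε : ℝ => Q (fun i => a i + ε)) := by
    apply hQcont.comp
    exact continuous_pi fun i => continuous_const.add continuous_id
  have hpertb : Continuous (fun ε : ℝ => Q (fun i => b i + ε)) := by
    apply hQcont.comp
    exact continuous_pi fun i => continuous_const.add continuous_id
  have ha0 : (fun i => a i + (0:ℝ)) = a := by funext i; ring
  have hb0 : (fun i => b i + (0:ℝ)) = b := by funext i; ring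
  have hEa : ∀ᶠ ε in nhdsWithin (0:ℝ) (Set.Ioi 0),
      0 < Q (fun i => a i + ε) ∧ Q (fun i => b i + ε) < 0 ∧ 0 < ε := by
    have h1 : ∀ᶠ ε in nhds (0:ℝ), 0 < Q (fun i => a i + ε) := by
      have := hperta.continuousAt (x := 0)
      have := this.eventually (p := fun y => 0 < y) (by simpa only [ha0] using eventually_gt_nhds hQa)
      simpa [ha0] using this
    have h2 : ∀ᶠ ε in nhds (0:ℝ), Q (fun i => b i + ε) < 0 := by
      have := hpertb.continuousAt (x := 0)
      have := this.eventually (p := fun y => y < 0) (by simpa only [hb0] using eventually_lt_nhds hQb)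
      simpa [hb0] using this
    filter_upwards [(h1.and h2).filter_mono nhdsWithin_le_nhds,
      self_mem_nhdsWithin] with ε hε hε'
    exact ⟨hε.1, hε.2, hε'⟩
  obtain ⟨ε, hε1, hε2, hε3⟩ := hEa.exists
  set a' : Fin n → ℝ := fun i => a i + ε with ha'
  set b' : Fin n → ℝ := fun i => b i + ε with hb'
  have ha'pos : ∀ i, 0 < a' i := fun i => add_pos_of_nonneg_of_pos (ha i) hε3
  have hb'pos : ∀ i, 0 < b' i := fun i => add_pos_of_nonneg_of_pos (hb i) hε3
  -- the path
  set φ : ℝ → ℝ := fun t => Q (fun i => (1 - t) * a' i + t * b' i) with hφ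
  have hφcont : Continuous φ := by
    apply hQcont.comp
    apply continuous_pi
    intro i
    fun_prop
  have hφ0 : φ 0 = Q a' := by simp [hφ]
  have hφ1 : φ 1 = Q b' := by simp [hφ]
  have : (0:ℝ) ∈ Set.Icc (φ 1) (φ 0) := by
    rw [hφ0, hφ1]
    exact ⟨le_of_lt hε2, le_of_lt hε1⟩
  have := intermediate_value_Icc' (by norm_num : (0:ℝ) ≤ 1) hφcont.continuousOn this
  obtain ⟨t, ht, hφt⟩ := this
  refine ⟨fun i => (1 - t) * a' i + t * b' i, ?_, hφt⟩
  intro i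
  dsimp only
  rcases eq_or_lt_of_le ht.1 with h | h
  · simp [← h]; exact ha'pos i
  · have : 0 < t * b' i := mul_pos h (hb'pos i)
    have h2 : 0 ≤ (1 - t) * a' i :=
      mul_nonneg (by linarith [ht.2]) (ha'pos i).le
    linarith
end

section
/- Let Q : ℝ^n → ℝ be a quadratic form. If there exist a, b in the closed positive orthant with Q(a) > 0 and Q(b) < 0, then there exists a point p in the open positive orthant with Q(p) = 0 at which the gradient of Q is nonzero (i.e., p is a regular point of Q). -/
open Matrix

/-- Under the same hypotheses as Statement 0, there is a zero of `Q` in the open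
positive orthant which is a regular point, i.e. the gradient `∇Q(p) = 2 M p` is nonzero. -/
theorem stmt_1 (n : ℕ) (M : Matrix (Fin n) (Fin n) ℝ) (hM : M.IsSymm)
    (Q : (Fin n → ℝ) → ℝ) (hQ : ∀ x, Q x = x ⬝ᵥ M.mulVec x)
    (a b : Fin n → ℝ) (ha : ∀ i, 0 ≤ a i) (hb : ∀ i, 0 ≤ b i)
    (hQa : 0 < Q a) (hQb : Q b < 0) :
    ∃ p : Fin n → ℝ, (∀ i, 0 < p i) ∧ Q p = 0 ∧ (2 : ℝ) • M.mulVec p ≠ 0 := by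
  have hQfun : Q = fun x => x ⬝ᵥ M.mulVec x := funext hQ
  have hcont : Continuous Q := by
    rw [hQfun]
    simp only [dotProduct, Matrix.mulVec]
    exact continuous_finset_sum _ fun i _ => (continuous_apply i).mul
      (continuous_finset_sum _ fun j _ => (continuous_const.mul (continuous_apply j)))
  -- perturb into open orthant
  have hga : Continuous fun ε : ℝ => Q (a + ε • (1 : Fin n → ℝ)) :=
    hcont.comp (continuous_const.add (continuous_id.smul continuous_const))
  have hgb : Continuous fun ε : ℝ => Q (b + ε • (1 : Fin n → ℝ)) :=
    hcont.comp (continuous_const.add (continuous_id.smul continuous_const))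
  have h1 : ∀ᶠ ε : ℝ in nhds 0, 0 < Q (a + ε • (1 : Fin n → ℝ)) := by
    have hcA := hga.continuousAt (x := 0)
    have hm : Set.Ioi (0:ℝ) ∈ nhds (Q (a + (0:ℝ) • (1 : Fin n → ℝ))) :=
      isOpen_Ioi.mem_nhds (by simpa using hQa)
    exact hcA.eventually_mem hm
  have h2 : ∀ᶠ ε : ℝ in nhds 0, Q (b + ε • (1 : Fin n → ℝ)) < 0 := by
    have hcB := hgb.continuousAt (x := 0)
    have hm : Set.Iio (0:ℝ) ∈ nhds (Q (b + (0:ℝ) • (1 : Fin n → ℝ))) :=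
      isOpen_Iio.mem_nhds (by simpa using hQb)
    exact hcB.eventually_mem hm
  obtain ⟨ε, ⟨hε1, hε2⟩, hε3⟩ :=
    (((h1.filter_mono nhdsWithin_le_nhds).and (h2.filter_mono nhdsWithin_le_nhds)).and
      (self_mem_nhdsWithin (s := Set.Ioi (0:ℝ)))).exists
  set a' := a + ε • (1 : Fin n → ℝ) with ha'
  set b' := b + ε • (1 : Fin n → ℝ) with hb'
  have hεpos : (0:ℝ) < ε := hε3
  have ha'pos : ∀ i, ε ≤ a' i := fun i => by
    simp [ha', Pi.smul_apply]; linarith [ha i]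
  have hb'pos : ∀ i, ε ≤ b' i := fun i => by
    simp [hb', Pi.smul_apply]; linarith [hb i]
  set v := b' - a' with hv
  have hf : Continuous fun t : ℝ => Q (a' + t • v) :=
    hcont.comp (continuous_const.add (continuous_id.smul continuous_const))
  have hmem : (0:ℝ) ∈ Set.Icc (Q (a' + (1:ℝ) • v)) (Q (a' + (0:ℝ) • v)) := by
    constructor
    · simp only [one_smul, hv]
      simp only [add_sub_cancel]
      linarith
    · simp only [zero_smul, add_zero]
      linarith
  obtain ⟨t, htmem, htz⟩ := intermediate_value_Icc' (by norm_num : (0:ℝ) ≤ 1)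
    (hf.continuousOn) hmem
  set p := a' + t • v with hp
  have ht0 : t ≠ 0 := by
    rintro rfl
    simp only [hp, zero_smul, add_zero] at htz
    linarith
  have ht1 : t ≠ 1 := by
    rintro rfl
    simp only [hp, one_smul, hv, add_sub_cancel] at htz
    linarith
  have ht0' : 0 < t := lt_of_le_of_ne htmem.1 (Ne.symm ht0)
  have ht1' : t < 1 := lt_of_le_of_ne htmem.2 ht1
  refine ⟨p, ?_, htz, ?_⟩
  · intro i
    have : p i = (1 - t) * a' i + t * b' i := by
      simp [hp, hv, Pi.smul_apply]; ring
    rw [this]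
    have := ha'pos i; have := hb'pos i
    nlinarith
  · intro hgrad
    have hMp : M.mulVec p = 0 := by
      have := (smul_eq_zero.mp hgrad).resolve_left (by norm_num)
      exact this
    -- symmetry: p ⬝ᵥ M *ᵥ x = 0 for all x
    have hsym : ∀ x : Fin n → ℝ, p ⬝ᵥ M.mulVec x = 0 := by
      intro x
      rw [Matrix.dotProduct_mulVec, ← Matrix.mulVec_transpose, hM.eq, hMp]
      simp
    have hright : ∀ x : Fin n → ℝ, x ⬝ᵥ M.mulVec p = 0 := by
      intro x; rw [hMp]; simp
    have key : ∀ x : Fin n → ℝ, Q x = (x - p) ⬝ᵥ M.mulVec (x - p) := by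
      intro x
      rw [hQ]
      simp [Matrix.mulVec_sub, dotProduct_sub, sub_dotProduct, hsym, hright]
    have hQa' := hε1
    have hQb' := hε2
    rw [key] at hQa' hQb'
    have hap : a' - p = (-t) • v := by
      simp only [hp]; module
    have hbp : b' - p = (1 - t) • v := by
      simp only [hp, hv]; module
    rw [hap] at hQa'
    rw [hbp] at hQb'
    set c := v ⬝ᵥ M.mulVec v with hc
    have e1 : ((-t) • v) ⬝ᵥ M.mulVec ((-t) • v) = t^2 * c := by
      rw [Matrix.mulVec_smul, smul_dotProduct, dotProduct_smul]
      simp [hc]; ring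
    have e2 : ((1-t) • v) ⬝ᵥ M.mulVec ((1-t) • v) = (1-t)^2 * c := by
      rw [Matrix.mulVec_smul, smul_dotProduct, dotProduct_smul]
      simp [hc]; ring
    rw [e1] at hQa'
    rw [e2] at hQb'
    have hcneg : c < 0 := by
      by_contra h
      push_neg at h
      nlinarith [sq_nonneg (1-t)]
    nlinarith [mul_nonpos_of_nonneg_of_nonpos (sq_nonneg t) hcneg.le]
end

section
/- Let Q : ℝ^n → ℝ be a quadratic form. If there exist a, b in the closed positive orthant with Q(a) > 0 and Q(b) < 0, then there exists an open set U contained in the open positive orthant such that U ∩ Q⁻¹(0) is nonempty and Q has nonvanishing gradient at every point of U ∩ Q⁻¹(0). -/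
open Matrix

/-- strong calibration, Lemma 1: there is an open set `U` inside the open positive
orthant such that `U ∩ Q⁻¹(0)` is nonempty and the gradient `2 M x` of `Q` is nonvanishing at
every point of `U ∩ Q⁻¹(0)`. -/
theorem stmt_2 (n : ℕ) (M : Matrix (Fin n) (Fin n) ℝ) (hM : M.IsSymm)
    (Q : (Fin n → ℝ) → ℝ) (hQ : ∀ x, Q x = x ⬝ᵥ M.mulVec x)
    (a b : Fin n → ℝ) (ha : ∀ i, 0 ≤ a i) (hb : ∀ i, 0 ≤ b i)
    (hQa : 0 < Q a) (hQb : Q b < 0) :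
    ∃ U : Set (Fin n → ℝ), IsOpen U ∧ U ⊆ {x | ∀ i, 0 < x i} ∧
      (U ∩ Q ⁻¹' {0}).Nonempty ∧
      ∀ p ∈ U ∩ Q ⁻¹' {0}, (2 : ℝ) • M.mulVec p ≠ 0 := by
  -- symmetry of the bilinear form
  have hsym : ∀ x y : Fin n → ℝ, x ⬝ᵥ M.mulVec y = y ⬝ᵥ M.mulVec x := fun x y => by
    rw [Matrix.dotProduct_mulVec, ← Matrix.mulVec_transpose, hM.eq, dotProduct_comm]
  -- expansion of the quadratic form along a line
  have expand : ∀ (x v : Fin n → ℝ) (s : ℝ),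
      Q (x + s • v) = Q x + 2*s*(v ⬝ᵥ M.mulVec x) + s^2 * (v ⬝ᵥ M.mulVec v) := by
    intro x v s
    simp only [hQ]
    simp only [Matrix.mulVec_add, Matrix.mulVec_smul, dotProduct_add, add_dotProduct,
      smul_dotProduct, dotProduct_smul, hsym x v, smul_eq_mul]
    ring
  have contQ : ∀ x v : Fin n → ℝ, Continuous fun s : ℝ => Q (x + s • v) := by
    intro x v
    simp only [expand]
    continuity
  -- choose ε > 0 with Q (a + ε•1) > 0 and Q (b + ε•1) < 0
  have h1 : ∀ᶠ s in nhds (0:ℝ), 0 < Q (a + s • (1 : Fin n → ℝ)) := by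
    have := continuousAt_const.eventually_lt ((contQ a 1).continuousAt (x := (0:ℝ)))
      (by simpa using hQa)
    simpa using this
  have h2 : ∀ᶠ s in nhds (0:ℝ), Q (b + s • (1 : Fin n → ℝ)) < 0 := by
    have := ((contQ b 1).continuousAt (x := (0:ℝ))).eventually_lt continuousAt_const
      (by simpa using hQb)
    simpa using this
  have hmem : Set.Ioi (0:ℝ) ∈ nhdsWithin (0:ℝ) (Set.Ioi (0:ℝ)) := self_mem_nhdsWithin
  obtain ⟨ε, ⟨hεa, hεb⟩, hεpos⟩ :=
    (((h1.and h2).filter_mono (nhdsWithin_le_nhds (s := Set.Ioi (0:ℝ)))).and hmem).exists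
  set a' : Fin n → ℝ := a + ε • (1 : Fin n → ℝ) with ha'def
  set b' : Fin n → ℝ := b + ε • (1 : Fin n → ℝ) with hb'def
  have ha' : ∀ i, 0 < a' i := fun i => by
    simp only [ha'def, Pi.add_apply, Pi.smul_apply, Pi.one_apply, smul_eq_mul, mul_one]
    linarith [ha i]
  have hb' : ∀ i, 0 < b' i := fun i => by
    simp only [hb'def, Pi.add_apply, Pi.smul_apply, Pi.one_apply, smul_eq_mul, mul_one]
    linarith [hb i]
  set v : Fin n → ℝ := b' - a' with hvdef
  have hb'v : a' + (1:ℝ) • v = b' := by module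
  -- IVT along the segment from a' to b'
  have hq0 : (0:ℝ) ∈ Set.Ioo (Q (a' + (1:ℝ) • v)) (Q (a' + (0:ℝ) • v)) := by
    constructor
    · rw [hb'v]; exact hεb
    · simpa using hεa
  obtain ⟨t₀, ht₀mem, ht₀⟩ := intermediate_value_Ioo' (le_of_lt one_pos)
    (contQ a' v).continuousOn hq0
  obtain ⟨ht₀0, ht₀1⟩ := ht₀mem
  set x₀ : Fin n → ℝ := a' + t₀ • v with hx₀def
  have hx₀Q : Q x₀ = 0 := ht₀
  -- x₀ is strictly positive
  have hx₀pos : ∀ i, 0 < x₀ i := by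
    intro i
    have : x₀ i = (1 - t₀) * a' i + t₀ * b' i := by
      simp only [hx₀def, hvdef, Pi.add_apply, Pi.smul_apply, Pi.sub_apply, smul_eq_mul]
      ring
    rw [this]
    have := ha' i; have := hb' i
    nlinarith
  -- gradient nonvanishing at x₀
  have hMx₀ : M.mulVec x₀ ≠ 0 := by
    intro h0
    have hdot : v ⬝ᵥ M.mulVec x₀ = 0 := by rw [h0]; simp
    have hQv : v ⬝ᵥ M.mulVec v = v ⬝ᵥ M.mulVec v := rfl
    have ea : a' = x₀ + (-t₀) • v := by simp only [hx₀def]; module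
    have eb : b' = x₀ + (1 - t₀) • v := by simp only [hx₀def]; module
    have hqa' : Q a' = t₀^2 * (v ⬝ᵥ M.mulVec v) := by
      rw [ea, expand, hx₀Q, hdot]; ring
    have hqb' : Q b' = (1 - t₀)^2 * (v ⬝ᵥ M.mulVec v) := by
      rw [eb, expand, hx₀Q, hdot]; ring
    have hpos : 0 < v ⬝ᵥ M.mulVec v := by
      have := hεa; rw [hqa'] at this
      nlinarith
    have hneg : v ⬝ᵥ M.mulVec v < 0 := by
      have := hεb; rw [hqb'] at this
      nlinarith
    linarith
  -- the open set
  have hcontM : Continuous fun y : Fin n → ℝ => M.mulVec y := by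
    refine continuous_pi fun i => ?_
    simp only [Matrix.mulVec, dotProduct]
    exact continuous_finset_sum _ fun j _ => continuous_const.mul (continuous_apply j)
  have horth : IsOpen {x : Fin n → ℝ | ∀ i, 0 < x i} := by
    have : {x : Fin n → ℝ | ∀ i, 0 < x i} = ⋂ i, {x | 0 < x i} := by ext; simp
    rw [this]
    exact isOpen_iInter_of_finite fun i => isOpen_lt continuous_const (continuous_apply i)
  refine ⟨{y | M.mulVec y ≠ 0} ∩ {x | ∀ i, 0 < x i}, ?_, Set.inter_subset_right, ?_, ?_⟩
  · exact ((isOpen_compl_singleton.preimage hcontM).inter horth)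
  · exact ⟨x₀, ⟨⟨hMx₀, hx₀pos⟩, hx₀Q⟩⟩
  · rintro p ⟨⟨hp1, -⟩, -⟩
    exact smul_ne_zero two_ne_zero hp1
end

section
/- Let Q : ℝ^n → ℝ be a quadratic form that is negative at some point b of the closed positive orthant, and suppose there exists a point a in the closed positive orthant with Q(a) > 0. Then the zero set Q⁻¹(0) intersected with the open positive orthant is nonempty, and moreover for each p in this intersection and each ε > 0, the open ball B(p, ε) intersected with the open positive orthant contains a point q with Q(q) > 0 and a point r with Q(r) < 0. -/
open Matrix

private lemma quad_cont (n : ℕ) (M : Matrix (Fin n) (Fin n) ℝ) :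
    Continuous fun x : Fin n → ℝ => x ⬝ᵥ M.mulVec x := by
  simp only [dotProduct, Matrix.mulVec]
  fun_prop

private lemma quad_expand (n : ℕ) (M : Matrix (Fin n) (Fin n) ℝ) (hM : M.IsSymm)
    (p v : Fin n → ℝ) (t : ℝ) :
    (p + t • v) ⬝ᵥ M.mulVec (p + t • v)
      = p ⬝ᵥ M.mulVec p + 2*(p ⬝ᵥ M.mulVec v)*t + (v ⬝ᵥ M.mulVec v)*t^2 := by
  have hsym : v ⬝ᵥ M.mulVec p = p ⬝ᵥ M.mulVec v := by
    rw [Matrix.dotProduct_mulVec, ← Matrix.mulVec_transpose, hM.eq, dotProduct_comm]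
  simp only [Matrix.mulVec_add, Matrix.mulVec_smul, dotProduct_add,
    add_dotProduct, smul_dotProduct, dotProduct_smul, smul_eq_mul, hsym]
  ring

private lemma key_lemma (A B s : ℝ) (h : 0 < A + 2*B) (hs : 0 < s) :
    ∃ t : ℝ, |t| ≤ s ∧ 0 < 2*B*t + A*t^2 := by
  rcases lt_trichotomy B 0 with hB | hB | hB
  · set m := min s (-B/(|A|+1)) with hm
    have h1 : 0 < m := lt_min hs (div_pos (by linarith) (by positivity))
    have h2 : m * (|A|+1) ≤ -B := by
      have := min_le_right s (-B/(|A|+1))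
      calc m * (|A|+1) ≤ (-B/(|A|+1)) * (|A|+1) := by
            apply mul_le_mul_of_nonneg_right this (by positivity)
        _ = -B := by field_simp
    refine ⟨-m, ?_, ?_⟩
    · rw [abs_neg, abs_of_pos h1]; exact min_le_left _ _
    · have hA1 : -|A| ≤ A := neg_abs_le A
      have hA2 : A ≤ |A| := le_abs_self A
      nlinarith [mul_pos h1 h1, mul_le_mul_of_nonneg_right h2 h1.le,
        mul_le_mul_of_nonneg_right hA2 (mul_pos h1 h1).le]
  · refine ⟨s, by rw [abs_of_pos hs], ?_⟩
    have hA : 0 < A := by linarith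
    subst hB; nlinarith [mul_pos hs hs]
  · set m := min s (B/(|A|+1)) with hm
    have h1 : 0 < m := lt_min hs (div_pos hB (by positivity))
    have h2 : m * (|A|+1) ≤ B := by
      have := min_le_right s (B/(|A|+1))
      calc m * (|A|+1) ≤ (B/(|A|+1)) * (|A|+1) := by
            apply mul_le_mul_of_nonneg_right this (by positivity)
        _ = B := by field_simp
    refine ⟨m, ?_, ?_⟩
    · rw [abs_of_pos h1]; exact min_le_left _ _
    · have hA1 : -|A| ≤ A := neg_abs_le A
      nlinarith [mul_pos h1 h1, mul_le_mul_of_nonneg_right h2 h1.le,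
        mul_le_mul_of_nonneg_right hA1 (mul_pos h1 h1).le]

private lemma orthant_open (n : ℕ) : IsOpen {x : Fin n → ℝ | ∀ i, 0 < x i} := by
  have : {x : Fin n → ℝ | ∀ i, 0 < x i} = ⋂ i, {x : Fin n → ℝ | 0 < x i} := by
    ext x; simp
  rw [this]
  exact isOpen_iInter_of_finite fun i => isOpen_Ioi.preimage (continuous_apply i)

private lemma near (n : ℕ) (M : Matrix (Fin n) (Fin n) ℝ) (hM : M.IsSymm)
    (p v : Fin n → ℝ) (hp : ∀ i, 0 < p i)
    (hpQ : p ⬝ᵥ M.mulVec p = 0)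
    (hpos : 0 < (v ⬝ᵥ M.mulVec v) + 2 * (p ⬝ᵥ M.mulVec v))
    (ε : ℝ) (hε : 0 < ε) :
    ∃ q, dist q p < ε ∧ (∀ i, 0 < q i) ∧ 0 < q ⬝ᵥ M.mulVec q := by
  set g : ℝ → (Fin n → ℝ) := fun t => p + t • v with hg
  have hgc : Continuous g := by fun_prop
  have hU : IsOpen (g ⁻¹' ({x : Fin n → ℝ | ∀ i, 0 < x i} ∩ Metric.ball p ε)) :=
    ((orthant_open n).inter Metric.isOpen_ball).preimage hgc
  have h0 : (0:ℝ) ∈ g ⁻¹' ({x : Fin n → ℝ | ∀ i, 0 < x i} ∩ Metric.ball p ε) := by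
    simp only [Set.mem_preimage, hg, zero_smul, add_zero, Set.mem_inter_iff]
    exact ⟨hp, Metric.mem_ball_self hε⟩
  obtain ⟨s, hs, hsub⟩ := Metric.isOpen_iff.1 hU 0 h0
  obtain ⟨t, ht, htpos⟩ := key_lemma (v ⬝ᵥ M.mulVec v) (p ⬝ᵥ M.mulVec v) (s/2)
    (by linarith) (by linarith)
  have htmem : t ∈ Metric.ball (0:ℝ) s := by
    simp only [Metric.mem_ball, Real.dist_eq, sub_zero]
    calc |t| ≤ s/2 := ht
      _ < s := by linarith
  obtain ⟨hq1, hq2⟩ := hsub htmem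
  exact ⟨g t, hq2, hq1, by rw [quad_expand n M hM p v t, hpQ]; linarith⟩

/-- Under the strong calibration hypotheses, the zero set of `Q` meets the open
positive orthant, and near any such zero `p` (within the open orthant) there are points of the
open orthant where `Q` is positive and points where `Q` is negative. -/
theorem stmt_12 (n : ℕ) (M : Matrix (Fin n) (Fin n) ℝ) (hM : M.IsSymm)
    (Q : (Fin n → ℝ) → ℝ) (hQ : ∀ x, Q x = x ⬝ᵥ M.mulVec x)
    (a b : Fin n → ℝ) (ha : ∀ i, 0 ≤ a i) (hb : ∀ i, 0 ≤ b i)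
    (hQa : 0 < Q a) (hQb : Q b < 0) :
    (∃ p : Fin n → ℝ, (∀ i, 0 < p i) ∧ Q p = 0) ∧
    ∀ p : Fin n → ℝ, (∀ i, 0 < p i) → Q p = 0 → ∀ ε > 0,
      (∃ q : Fin n → ℝ, dist q p < ε ∧ (∀ i, 0 < q i) ∧ 0 < Q q) ∧
      (∃ r : Fin n → ℝ, dist r p < ε ∧ (∀ i, 0 < r i) ∧ Q r < 0) := by
  have hQeq : Q = fun x => x ⬝ᵥ M.mulVec x := funext hQ
  have hQc : Continuous Q := hQeq ▸ quad_cont n M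
  -- perturb a and b to strictly positive points
  have perturb : ∀ (c : Fin n → ℝ), (∀ i, 0 ≤ c i) → ∀ S : Set ℝ, IsOpen S → Q c ∈ S →
      ∃ c' : Fin n → ℝ, (∀ i, 0 < c' i) ∧ Q c' ∈ S := by
    intro c hc S hS hcS
    have hU : IsOpen (Q ⁻¹' S) := hS.preimage hQc
    obtain ⟨δ, hδ, hsub⟩ := Metric.isOpen_iff.1 hU c hcS
    refine ⟨c + fun _ => δ/2, fun i => by have := hc i; simp; linarith, ?_⟩
    apply hsub
    simp only [Metric.mem_ball, dist_eq_norm, add_sub_cancel_left]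
    calc ‖fun _ : Fin n => δ/2‖ ≤ δ/2 := by
          apply pi_norm_le_iff_of_nonneg (by linarith) |>.2
          intro i; rw [Real.norm_eq_abs, abs_of_pos (by linarith)]
      _ < δ := by linarith
  obtain ⟨a', ha', hQa'⟩ := perturb a ha (Set.Ioi 0) isOpen_Ioi hQa
  obtain ⟨b', hb', hQb'⟩ := perturb b hb (Set.Iio 0) isOpen_Iio hQb
  simp only [Set.mem_Ioi] at hQa'
  simp only [Set.mem_Iio] at hQb'
  -- IVT to find a zero
  have hp : ∃ p : Fin n → ℝ, (∀ i, 0 < p i) ∧ Q p = 0 := by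
    set f : ℝ → ℝ := fun t => Q (a' + t • (b' - a')) with hf
    have hfc : Continuous f := by
      apply hQc.comp; fun_prop
    have hf0 : f 0 = Q a' := by simp [hf]
    have hf1 : f 1 = Q b' := by simp [hf]
    have : (0:ℝ) ∈ Set.Icc (f 1) (f 0) :=
      ⟨by rw [hf1]; linarith, by rw [hf0]; linarith⟩
    obtain ⟨t, htmem, htval⟩ := intermediate_value_Icc' zero_le_one hfc.continuousOn this
    refine ⟨a' + t • (b' - a'), fun i => ?_, htval⟩
    obtain ⟨ht0, ht1⟩ := htmem
    have h1 := ha' i; have h2 := hb' i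
    simp only [Pi.add_apply, Pi.smul_apply, Pi.sub_apply, smul_eq_mul]
    have hm : 0 < min (a' i) (b' i) := lt_min h1 h2
    nlinarith [mul_nonneg (sub_nonneg.2 ht1) (sub_nonneg.2 (min_le_left (a' i) (b' i))),
      mul_nonneg ht0 (sub_nonneg.2 (min_le_right (a' i) (b' i)))]
  refine ⟨hp, ?_⟩
  intro p hpp hQp ε hε
  have hQp' : p ⬝ᵥ M.mulVec p = 0 := by rw [← hQ]; exact hQp
  constructor
  · -- positive point near p, direction a - p
    have hpos : 0 < ((a-p) ⬝ᵥ M.mulVec (a-p)) + 2 * (p ⬝ᵥ M.mulVec (a-p)) := by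
      have := quad_expand n M hM p (a - p) 1
      simp only [one_smul, add_sub_cancel] at this
      rw [← hQ, ← hQ] at this
      rw [hQp] at this
      linarith [hQa, this.symm.le, this.le]
    obtain ⟨q, h1, h2, h3⟩ := near n M hM p (a - p) hpp hQp' hpos ε hε
    exact ⟨q, h1, h2, by rw [hQ]; exact h3⟩
  · -- negative point near p: apply `near` with -M
    have hMneg : (-M).IsSymm := by rw [Matrix.IsSymm, Matrix.transpose_neg, hM.eq]
    have hpQneg : p ⬝ᵥ (-M).mulVec p = 0 := by
      rw [Matrix.neg_mulVec, dotProduct_neg, hQp', neg_zero]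
    have hpos : 0 < ((b-p) ⬝ᵥ (-M).mulVec (b-p)) + 2 * (p ⬝ᵥ (-M).mulVec (b-p)) := by
      have := quad_expand n M hM p (b - p) 1
      simp only [one_smul, add_sub_cancel] at this
      rw [← hQ, ← hQ] at this
      rw [hQp] at this
      simp only [Matrix.neg_mulVec, dotProduct_neg]
      linarith [hQb, this.le, this.symm.le]
    obtain ⟨r, h1, h2, h3⟩ := near n (-M) hMneg p (b - p) hpp hpQneg hpos ε hε
    refine ⟨r, h1, h2, ?_⟩
    rw [Matrix.neg_mulVec, dotProduct_neg] at h3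
    rw [hQ]; linarith
end
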